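/- arXiv:1903.10365 — 2 statements merged into one kernel-verified Lean document; each statement's English description precedes it below -/
import Mathlib

section
/- Let k, n be integers with 1 ≤ k < n/2 and let ε > 0. Then for every x ∈ ℝ^n, the k-fold iterated Laplacian with alternating sign satisfies (−Δ)^k [ (ε + |x|²)^{-(n-2k)/2} ] = 4^k ε^k · (Γ((n+2k)/2)/Γ((n-2k)/2)) · (ε + |x|²)^{-(n+2k)/2}, where Δ = ∑_{i=1}^n ∂²/∂x_i². -/
open Real Finset

/-- The Euclidean Laplacian `Δ f = ∑ ∂²f/∂xᵢ²` on `ℝⁿ`. -/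
noncomputable def eucLaplacian {n : ℕ} (f : EuclideanSpace ℝ (Fin n) → ℝ) :
    EuclideanSpace ℝ (Fin n) → ℝ :=
  fun x => ∑ i : Fin n,
    iteratedFDeriv ℝ 2 f x ![EuclideanSpace.single i 1, EuclideanSpace.single i 1]

/-- The k-fold iterate `(-Δ)^k`. -/
noncomputable def negLapPow {n : ℕ} (k : ℕ) (f : EuclideanSpace ℝ (Fin n) → ℝ) :
    EuclideanSpace ℝ (Fin n) → ℝ :=
  (fun g => fun x => -eucLaplacian g x)^[k] f

/-!
Write `φ = ε + ‖x‖²`. Since `‖x‖² = φ - ε`, a direct computation gives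
`-Δ φ^(-a) = 2a(n - 2 - 2a) φ^(-(a+1)) + 4a(a+1) ε φ^(-(a+2))`.
Hence `(-Δ)^j φ^(-b)` is a combination of the terms `ε^i φ^(-(b+2i+l))` with `i + l = j`,
and the coefficients obey a Pascal-type recursion whose solution, for `n = 2(b + κ)`, is
`4^(i+l) C(i+l, i) (b)_(2i+l) (κ-1-i)(κ-2-i)⋯(κ-i-l)`, where `(b)_m = b(b+1)⋯(b+m-1)`.
When `κ = k` and `j = k` the falling factorial vanishes unless `l = 0`, so only
`4^k (b)_(2k) ε^k φ^(-(b+2k))` survives, and `(b)_(2k) = Γ(b + 2k)/Γ(b)`.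
-/

open InnerProductSpace Laplacian Polynomial

section Calculus

variable {E : Type*} [NormedAddCommGroup E] [InnerProductSpace ℝ E] {ε : ℝ}

theorem hasFDerivAt_rpow_const_add_norm_sq {p : ℝ} {y : E} (hy : ε + ‖y‖ ^ 2 ≠ 0) :
    HasFDerivAt (fun z : E => (ε + ‖z‖ ^ 2) ^ p)
      ((p * (ε + ‖y‖ ^ 2) ^ (p - 1)) • (2 • innerSL ℝ y)) y := by
  have h := (hasFDerivAt_id (𝕜 := ℝ) y).norm_sq
  simp only [ContinuousLinearMap.comp_id, id] at h
  exact (h.const_add ε).rpow_const (Or.inl hy)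

theorem iteratedFDeriv_two_rpow_const_add_norm_sq (hε : 0 < ε) (p : ℝ) (x v : E) :
    iteratedFDeriv ℝ 2 (fun z : E => (ε + ‖z‖ ^ 2) ^ p) x ![v, v]
      = 2 * p * (ε + ‖x‖ ^ 2) ^ (p - 1) * ‖v‖ ^ 2
        + 4 * p * (p - 1) * (ε + ‖x‖ ^ 2) ^ (p - 2) * inner ℝ x v ^ 2 := by
  have hφ : ∀ y : E, ε + ‖y‖ ^ 2 ≠ 0 := fun y => by positivity
  have hD : fderiv ℝ (fun z : E => (ε + ‖z‖ ^ 2) ^ p)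
      = fun y => (p * (ε + ‖y‖ ^ 2) ^ (p - 1)) • (2 • innerSL ℝ y) :=
    funext fun y => (hasFDerivAt_rpow_const_add_norm_sq (hφ y)).fderiv
  have hD2 :
      HasFDerivAt (fun y : E => (p * (ε + ‖y‖ ^ 2) ^ (p - 1)) • (2 • innerSL ℝ y)) _ x :=
    ((hasFDerivAt_rpow_const_add_norm_sq (p := p - 1) (hφ x)).const_mul p).smul
      (2 • innerSL ℝ (E := E)).hasFDerivAt
  rw [iteratedFDeriv_two_apply, hD, hD2.fderiv]
  simp only [Matrix.cons_val_zero, Matrix.cons_val_one, add_apply, smul_apply,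
    ContinuousLinearMap.smulRight_apply, innerSL_apply_apply, smul_eq_mul, nsmul_eq_mul]
  rw [innerSL_apply_apply, real_inner_self_eq_norm_sq, show p - 1 - 1 = p - 2 by ring]
  ring

theorem laplacian_rpow_const_add_norm_sq [FiniteDimensional ℝ E] (hε : 0 < ε) (p : ℝ)
    (x : E) :
    Δ (fun z : E => (ε + ‖z‖ ^ 2) ^ p) x
      = 2 * p * Module.finrank ℝ E * (ε + ‖x‖ ^ 2) ^ (p - 1)
        + 4 * p * (p - 1) * ‖x‖ ^ 2 * (ε + ‖x‖ ^ 2) ^ (p - 2) := by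
  let b := stdOrthonormalBasis ℝ E
  rw [laplacian_eq_iteratedFDeriv_orthonormalBasis _ b]
  simp only [iteratedFDeriv_two_rpow_const_add_norm_sq hε, b.orthonormal.1, sum_add_distrib,
    ← mul_sum, b.sum_sq_inner_left, sum_const, card_univ, Fintype.card_fin, one_pow, mul_one,
    nsmul_eq_mul]
  ring

theorem laplacian_sum [FiniteDimensional ℝ E] {F : Type*} [NormedAddCommGroup F]
    [NormedSpace ℝ F] {ι : Type*} (s : Finset ι) {f : ι → E → F} {x : E}
    (hf : ∀ i ∈ s, ContDiffAt ℝ 2 (f i) x) :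
    Δ (fun y => ∑ i ∈ s, f i y) x = ∑ i ∈ s, Δ (f i) x := by
  classical
  induction s using Finset.induction_on with
  | empty => simp
  | insert i s hi ih =>
    have hs : ∀ j ∈ s, ContDiffAt ℝ 2 (f j) x := fun j hj => hf j (mem_insert_of_mem hj)
    simp_rw [sum_insert hi]
    exact ((hf i (mem_insert_self i s)).laplacian_add (ContDiffAt.sum hs)).trans
      (congrArg _ (ih hs))

theorem laplacian_const_mul [FiniteDimensional ℝ E] (c : ℝ) {f : E → ℝ} {x : E}
    (hf : ContDiffAt ℝ 2 f x) : Δ (fun y => c * f y) x = c * Δ f x :=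
  laplacian_smul c hf

noncomputable def bubble (ε a : ℝ) : E → ℝ := fun x => (ε + ‖x‖ ^ 2) ^ (-a)

theorem contDiff_bubble (hε : 0 < ε) (a : ℝ) {m : WithTop ℕ∞} :
    ContDiff ℝ m (bubble ε a : E → ℝ) :=
  contDiff_iff_contDiffAt.2 fun _ =>
    ((contDiff_const.add (contDiff_norm_sq ℝ)).contDiffAt).rpow_const_of_ne (by positivity)

theorem neg_laplacian_bubble [FiniteDimensional ℝ E] (hε : 0 < ε) (a : ℝ) (x : E) :
    -Δ (bubble ε a : E → ℝ) x
      = 2 * a * (Module.finrank ℝ E - 2 - 2 * a) * bubble ε (a + 1) x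
        + 4 * a * (a + 1) * ε * bubble ε (a + 2) x := by
  have hφ : 0 < ε + ‖x‖ ^ 2 := by positivity
  have hshift :
      (ε + ‖x‖ ^ 2) ^ (-a - 1) = (ε + ‖x‖ ^ 2) ^ (-(a + 2)) * (ε + ‖x‖ ^ 2) := by
    rw [← rpow_add_one hφ.ne']; ring_nf
  unfold bubble
  rw [laplacian_rpow_const_add_norm_sq hε, show -(a + 1) = -a - 1 by ring, hshift,
    show -a - 2 = -(a + 2) by ring]
  ring

end Calculus

theorem Finset.Nat.sum_antidiagonal_succ_of_pascal {M : Type*} [AddCommMonoid M]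
    {f g h : ℕ × ℕ → M} (h_left : ∀ l, h (0, l + 1) = f (0, l))
    (h_right : ∀ i, h (i + 1, 0) = g (i, 0))
    (h_succ : ∀ i l, h (i + 1, l + 1) = f (i + 1, l) + g (i, l + 1)) (j : ℕ) :
    ∑ p ∈ antidiagonal (j + 1), h p = ∑ p ∈ antidiagonal j, (f p + g p) := by
  have hf : ∑ p ∈ antidiagonal j, f p
      = ∑ q ∈ antidiagonal (j + 1), if q.2 = 0 then 0 else f (q.1, q.2 - 1) := by
    simp [Nat.sum_antidiagonal_succ']
  have hg : ∑ p ∈ antidiagonal j, g p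
      = ∑ q ∈ antidiagonal (j + 1), if q.1 = 0 then 0 else g (q.1 - 1, q.2) := by
    simp [Nat.sum_antidiagonal_succ]
  rw [sum_add_distrib, hf, hg, ← sum_add_distrib]
  refine sum_congr rfl ?_
  rintro ⟨_ | i, _ | l⟩ hq
  · simp at hq
  · simp [h_left]
  · simp [h_right]
  · simp [h_succ]

theorem Real.Gamma_add_nat_div_Gamma_eq {n : ℕ} (z : ℝ) (hz : ∀ k : ℕ, z ≠ -k) :
    Gamma (z + n) / Gamma z = (ascPochhammer ℝ n).eval z := by
  apply Complex.ofReal_injective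
  have := Complex.Gamma_add_nat_div_Gamma_eq (n := n) (z : ℂ) fun k h =>
    hz k (by exact_mod_cast h)
  push_cast [← Complex.Gamma_ofReal]
  rw [this, ← ascPochhammer_map Complex.ofRealHom, eval_map]
  exact eval₂_at_apply _ z

section Coefficients

noncomputable def bubbleCoeff (b κ : ℝ) (i l : ℕ) : ℝ :=
  4 ^ (i + l) * (i + l).choose i * (ascPochhammer ℝ (2 * i + l)).eval b
    * (descPochhammer ℝ l).eval (κ - 1 - i)

variable {b κ : ℝ}

@[simp]
theorem bubbleCoeff_zero_zero : bubbleCoeff b κ 0 0 = 1 := by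
  simp [bubbleCoeff]

theorem bubbleCoeff_zero_succ (l : ℕ) :
    bubbleCoeff b κ 0 (l + 1) = 4 * (b + l) * (κ - 1 - l) * bubbleCoeff b κ 0 l := by
  simp only [bubbleCoeff, zero_add, mul_zero, Nat.choose_zero_right, Nat.cast_zero, sub_zero,
    ascPochhammer_succ_eval, descPochhammer_succ_eval]
  ring

theorem bubbleCoeff_succ_zero (i : ℕ) :
    bubbleCoeff b κ (i + 1) 0 = 4 * (b + 2 * i) * (b + 2 * i + 1) * bubbleCoeff b κ i 0 := by
  rw [bubbleCoeff, bubbleCoeff, show 2 * (i + 1) + 0 = 2 * i + 0 + 1 + 1 by ring,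
    ascPochhammer_succ_eval, ascPochhammer_succ_eval]
  simp only [add_zero, Nat.choose_self, descPochhammer_zero, eval_one]
  push_cast
  ring

theorem bubbleCoeff_succ_succ (i l : ℕ) :
    bubbleCoeff b κ (i + 1) (l + 1)
      = 4 * (b + 2 * (i + 1) + l) * (κ - 1 - (2 * (i + 1) + l)) * bubbleCoeff b κ (i + 1) l
        + 4 * (b + 2 * i + (l + 1)) * (b + 2 * i + (l + 1) + 1) * bubbleCoeff b κ i (l + 1) := by
  have hchoose :
      ((i + l + 1).choose (i + 1) : ℝ) * (i + 1) = (i + l + 1).choose i * (l + 1) := by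
    have := Nat.choose_succ_right_eq (i + l + 1) i
    rw [show i + l + 1 - i = l + 1 by omega] at this
    exact_mod_cast this
  have hpascal : ((i + l + 1 + 1).choose (i + 1) : ℝ)
      = (i + l + 1).choose i + (i + l + 1).choose (i + 1) := by
    exact_mod_cast Nat.choose_succ_succ (i + l + 1) i
  rw [bubbleCoeff, bubbleCoeff, bubbleCoeff, show i + 1 + (l + 1) = i + l + 1 + 1 by ring,
    show i + 1 + l = i + l + 1 by ring, show i + (l + 1) = i + l + 1 by ring,
    show 2 * (i + 1) + (l + 1) = 2 * i + l + 1 + 1 + 1 by ring,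
    show 2 * (i + 1) + l = 2 * i + l + 1 + 1 by ring, show 2 * i + (l + 1) = 2 * i + l + 1 by ring,
    hpascal, ascPochhammer_succ_eval, ascPochhammer_succ_eval, ascPochhammer_succ_eval,
    descPochhammer_succ_eval, descPochhammer_succ_left, eval_mul, eval_X, eval_comp, eval_sub,
    eval_X, eval_one]
  push_cast
  rw [show κ - 1 - (i : ℝ) - 1 = κ - 1 - (i + 1) by ring]
  linear_combination 4 ^ (i + l + 1 + 1) * (ascPochhammer ℝ (2 * i + l)).eval b
    * (b + (2 * i + l)) * (b + (2 * i + l + 1)) * (b + (2 * i + l + 1 + 1))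
    * (descPochhammer ℝ l).eval (κ - 1 - (i + 1)) * hchoose

theorem bubbleCoeff_eq_zero {k i l : ℕ} (hi : i < k) (hl : k ≤ i + l) :
    bubbleCoeff b k i l = 0 := by
  have hcast : (k : ℝ) - 1 - i = ((k - 1 - i : ℕ) : ℝ) := by
    rw [Nat.cast_sub (by omega), Nat.cast_sub (by omega)]
    simp
  rw [bubbleCoeff, hcast, descPochhammer_eval_eq_descFactorial,
    Nat.descFactorial_eq_zero_iff_lt.2 (by omega), Nat.cast_zero, mul_zero]

theorem sum_antidiagonal_succ_bubbleCoeff (ε : ℝ) (B : ℝ → ℝ) (j : ℕ) :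
    ∑ q ∈ antidiagonal (j + 1),
        bubbleCoeff b κ q.1 q.2 * ε ^ q.1 * B (b + (2 * q.1 + q.2 : ℕ))
      = ∑ p ∈ antidiagonal j, bubbleCoeff b κ p.1 p.2 * ε ^ p.1
          * (4 * (b + (2 * p.1 + p.2 : ℕ)) * (κ - 1 - (2 * p.1 + p.2 : ℕ))
              * B (b + (2 * p.1 + p.2 : ℕ) + 1)
            + 4 * (b + (2 * p.1 + p.2 : ℕ)) * (b + (2 * p.1 + p.2 : ℕ) + 1) * ε
              * B (b + (2 * p.1 + p.2 : ℕ) + 2)) := by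
  simp only [mul_add]
  refine Nat.sum_antidiagonal_succ_of_pascal (fun l => ?_) (fun i => ?_) (fun i l => ?_) j
  · rw [bubbleCoeff_zero_succ]
    push_cast
    ring_nf
  · rw [bubbleCoeff_succ_zero]
    push_cast
    ring_nf
  · rw [bubbleCoeff_succ_succ]
    push_cast
    ring_nf

end Coefficients

theorem eucLaplacian_eq_laplacian {n : ℕ} (f : EuclideanSpace ℝ (Fin n) → ℝ) :
    eucLaplacian f = Δ f := by
  rw [laplacian_eq_iteratedFDeriv_orthonormalBasis f (EuclideanSpace.basisFun (Fin n) ℝ)]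
  simp only [EuclideanSpace.basisFun_apply]
  rfl

theorem negLapPow_succ {n : ℕ} (k : ℕ) (f : EuclideanSpace ℝ (Fin n) → ℝ) :
    negLapPow (k + 1) f = -Δ (negLapPow k f) := by
  rw [negLapPow, Function.iterate_succ_apply', ← eucLaplacian_eq_laplacian]
  rfl

theorem negLapPow_bubble {n : ℕ} {ε b κ : ℝ} (hε : 0 < ε) (hn : (n : ℝ) = 2 * (b + κ))
    (j : ℕ) :
    negLapPow j (bubble ε b : EuclideanSpace ℝ (Fin n) → ℝ) =
      fun x => ∑ p ∈ antidiagonal j,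
        bubbleCoeff b κ p.1 p.2 * ε ^ p.1 * bubble ε (b + (2 * p.1 + p.2 : ℕ)) x := by
  induction j with
  | zero => funext x; simp [negLapPow]
  | succ j ih =>
    funext x
    have hdiff : ∀ c a : ℝ, ContDiffAt ℝ 2 (fun y => c * bubble ε a y) x := fun c a =>
      (contDiff_const.mul (contDiff_bubble hε a)).contDiffAt
    rw [negLapPow_succ, ih, Pi.neg_apply, laplacian_sum _ fun p _ => hdiff _ _,
      ← sum_neg_distrib]
    refine (sum_congr rfl fun p _ => ?_).trans
      (sum_antidiagonal_succ_bubbleCoeff ε (bubble ε · x) j).symm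
    rw [laplacian_const_mul _ ((contDiff_bubble hε _).contDiffAt), ← mul_neg,
      neg_laplacian_bubble hε, finrank_euclideanSpace_fin, hn]
    ring

theorem iterated_laplacian_sobolev_extremal_general (n k : ℕ) (hkn : 2 * k < n)
    (ε : ℝ) (hε : 0 < ε) (x : EuclideanSpace ℝ (Fin n)) :
    negLapPow k (fun y => (ε + ‖y‖ ^ 2) ^ (-(((n : ℝ) - 2 * k) / 2))) x
      = 4 ^ k * ε ^ k *
          (Real.Gamma (((n : ℝ) + 2 * k) / 2) / Real.Gamma (((n : ℝ) - 2 * k) / 2)) *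
          (ε + ‖x‖ ^ 2) ^ (-(((n : ℝ) + 2 * k) / 2)) := by
  have hb : 0 < ((n : ℝ) - 2 * k) / 2 := by
    have : (2 * k : ℝ) < n := by exact_mod_cast hkn
    linarith
  set b : ℝ := ((n : ℝ) - 2 * k) / 2
  have htop : ((n : ℝ) + 2 * k) / 2 = b + (2 * k + 0 : ℕ) := by push_cast; ring
  have hexpand := congrFun (negLapPow_bubble (n := n) (b := b) (κ := k) hε (by ring) k) x
  change negLapPow k (bubble ε b) x = _
  rw [hexpand, sum_eq_single_of_mem (k, 0) (HasAntidiagonal.mem_antidiagonal.2 (add_zero k)),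
    htop, Real.Gamma_add_nat_div_Gamma_eq b fun m => ((neg_nonpos.2 m.cast_nonneg).trans_lt hb).ne']
  · simp only [bubbleCoeff, bubble, add_zero, Nat.choose_self, Nat.cast_one, mul_one,
      descPochhammer_zero, eval_one]
    ring
  · rintro ⟨i, l⟩ hp hne
    rw [HasAntidiagonal.mem_antidiagonal] at hp
    have hl : l ≠ 0 := fun hl => hne (by simp_all)
    rw [bubbleCoeff_eq_zero (by omega) hp.ge, zero_mul, zero_mul]

/-- Identity (5.4) of the paper:
`(−Δ)^k (ε+|x|²)^{-(n-2k)/2} = 4^k ε^k (Γ((n+2k)/2)/Γ((n-2k)/2)) (ε+|x|²)^{-(n+2k)/2}`. -/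
theorem iterated_laplacian_sobolev_extremal (n k : ℕ) (hk : 1 ≤ k) (hkn : 2 * k < n)
    (ε : ℝ) (hε : 0 < ε) (x : EuclideanSpace ℝ (Fin n)) :
    negLapPow k (fun y => (ε + ‖y‖ ^ 2) ^ (-(((n : ℝ) - 2 * k) / 2))) x
      = 4 ^ k * ε ^ k *
          (Real.Gamma (((n : ℝ) + 2 * k) / 2) / Real.Gamma (((n : ℝ) - 2 * k) / 2)) *
          (ε + ‖x‖ ^ 2) ^ (-(((n : ℝ) + 2 * k) / 2)) :=
  iterated_laplacian_sobolev_extremal_general n k hkn ε hε x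
end

section
/- Let m, k be integers with 1 < k < m, and let ρ > 0. Then 4^{k-1} (sinh ρ)^{2-2m} · ∑_{j=0}^{m-1-k} [Γ(m)/(Γ(j+1)Γ(m-j))] · (sinh(ρ/2))^{2j+2k-2} ≤ (2 sinh(ρ/2))^{2k-2m} − (2 cosh(ρ/2))^{2k-2m}. -/
open Real Finset

/-!
Write `s = sinh (ρ/2)`, `c = cosh (ρ/2)`, `p = m - k`, `q = k - 1`. Since `sinh ρ = 2sc` and
`c² = 1 + s²`, clearing the common factor `(2s)^{2p} c^{2(p+q)}` turns the bound into the
polynomial inequality `∑_{j<p} C(p+q, j) tʲ + tᵖ (1+t)^q ≤ (1+t)^{p+q}` at `t = s²`. It holds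
because the part of the binomial expansion of `(1+t)^{p+q}` from degree `p` on dominates
`tᵖ (1+t)^q` coefficientwise: `C(q, i) ≤ C(p+q, p+i)`.
-/

theorem Nat.choose_le_choose_add_add (p q i : ℕ) : q.choose i ≤ (p + q).choose (p + i) := by
  rcases le_or_gt i q with hi | hi
  · rw [← Nat.choose_symm hi, ← Nat.choose_symm (by omega : p + i ≤ p + q),
      show p + q - (p + i) = q - i by omega]
    exact Nat.choose_le_add q p _ |>.trans_eq (by rw [add_comm])
  · simp [Nat.choose_eq_zero_of_lt hi]

theorem sum_range_choose_mul_pow_add_pow_mul_le {p q : ℕ} {t : ℝ} (ht : 0 ≤ t) :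
    ∑ j ∈ range p, ((p + q).choose j : ℝ) * t ^ j + t ^ p * (1 + t) ^ q ≤ (1 + t) ^ (p + q) := by
  have binom (n : ℕ) : (1 + t) ^ n = ∑ j ∈ range (n + 1), (n.choose j : ℝ) * t ^ j := by
    rw [add_comm, add_pow]
    exact sum_congr rfl fun j _ => by rw [one_pow, mul_one, mul_comm]
  rw [binom (p + q), binom q, mul_sum, show p + q + 1 = p + (q + 1) by omega,
    sum_range_add (fun j => ((p + q).choose j : ℝ) * t ^ j)]
  gcongr 1
  refine sum_le_sum fun i _ => ?_
  rw [mul_left_comm, ← pow_add]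
  gcongr
  exact_mod_cast Nat.choose_le_choose_add_add p q i

theorem Real.Gamma_div_Gamma_mul_Gamma_eq_choose {m j : ℕ} (hj : j < m) :
    Gamma m / (Gamma (j + 1) * Gamma (m - j)) = (m - 1).choose j := by
  obtain ⟨n, rfl⟩ : ∃ n, m = n + 1 := ⟨m - 1, by omega⟩
  rw [Nat.add_sub_cancel, Nat.cast_choose ℝ (by omega : j ≤ n),
    show ((n + 1 : ℕ) : ℝ) - j = (n - j : ℕ) + 1 by push_cast [(by omega : j ≤ n)]; ring,
    Nat.cast_succ]
  simp only [Gamma_nat_eq_factorial]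

theorem four_pow_mul_inv_mul_sum_choose_le {s c : ℝ} (hs : 0 < s) (hc : 0 < c)
    (hcs : c ^ 2 = 1 + s ^ 2) (p q : ℕ) :
    4 ^ q * ((2 * s * c) ^ (2 * (p + q)))⁻¹ *
        ∑ j ∈ range p, ((p + q).choose j : ℝ) * s ^ (2 * j + 2 * q)
      ≤ ((2 * s) ^ (2 * p))⁻¹ - ((2 * c) ^ (2 * p))⁻¹ := by
  have hpoly := sum_range_choose_mul_pow_add_pow_mul_le (p := p) (q := q) (sq_nonneg s)
  rw [← hcs] at hpoly
  have hlhs : 4 ^ q * ((2 * s * c) ^ (2 * (p + q)))⁻¹ *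
        ∑ j ∈ range p, ((p + q).choose j : ℝ) * s ^ (2 * j + 2 * q)
      = (∑ j ∈ range p, ((p + q).choose j : ℝ) * (s ^ 2) ^ j) /
          ((2 * s) ^ (2 * p) * (c ^ 2) ^ (p + q)) := by
    rw [eq_div_iff (by positivity), mul_sum, sum_mul]
    refine sum_congr rfl fun j _ => ?_
    rw [show (4 : ℝ) ^ q = 2 ^ (2 * q) by rw [pow_mul]; norm_num]
    field_simp
    ring
  have hrhs : ((2 * s) ^ (2 * p))⁻¹ - ((2 * c) ^ (2 * p))⁻¹
      = ((c ^ 2) ^ (p + q) - (s ^ 2) ^ p * (c ^ 2) ^ q) /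
          ((2 * s) ^ (2 * p) * (c ^ 2) ^ (p + q)) := by
    field_simp
    ring
  rw [hlhs, hrhs]
  gcongr
  linarith

/-- The pointwise bound of Theorem 1.10 in even dimension `n = 2m` (Lemma 6.3 of the
paper): the explicit Green's function sum is bounded by
`(2 sinh(ρ/2))^{2k-2m} − (2 cosh(ρ/2))^{2k-2m}`. -/
theorem green_function_bound_even (m k : ℕ) (hk1 : 1 < k) (hkm : k < m)
    (ρ : ℝ) (hρ : 0 < ρ) :
    (4 : ℝ) ^ (k - 1) * Real.sinh ρ ^ ((2 : ℝ) - 2 * m) *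
        ∑ j ∈ Finset.range (m - k),
          Real.Gamma (m : ℝ) / (Real.Gamma ((j : ℝ) + 1) * Real.Gamma ((m : ℝ) - j)) *
            Real.sinh (ρ / 2) ^ (2 * j + 2 * k - 2)
      ≤ (2 * Real.sinh (ρ / 2)) ^ (2 * (k : ℝ) - 2 * m)
          - (2 * Real.cosh (ρ / 2)) ^ (2 * (k : ℝ) - 2 * m) := by
  obtain ⟨q, rfl⟩ : ∃ q, k = q + 1 := ⟨k - 1, by omega⟩
  obtain ⟨p, rfl⟩ : ∃ p, m = p + q + 1 := ⟨m - (q + 1), by omega⟩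
  set s := sinh (ρ / 2)
  set c := cosh (ρ / 2)
  have hsinh : sinh ρ = 2 * s * c := by rw [← sinh_two_mul, mul_div_cancel₀ ρ two_ne_zero]
  have hsum : ∑ j ∈ range (p + q + 1 - (q + 1)),
        Gamma ((p + q + 1 : ℕ) : ℝ) / (Gamma ((j : ℝ) + 1) * Gamma (((p + q + 1 : ℕ) : ℝ) - j)) *
          s ^ (2 * j + 2 * (q + 1) - 2)
      = ∑ j ∈ range p, ((p + q).choose j : ℝ) * s ^ (2 * j + 2 * q) := by
    rw [show p + q + 1 - (q + 1) = p by omega]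
    refine sum_congr rfl fun j hj => ?_
    rw [Gamma_div_Gamma_mul_Gamma_eq_choose ((mem_range.mp hj).trans_le (by omega)),
      Nat.add_sub_cancel, show 2 * j + 2 * (q + 1) - 2 = 2 * j + 2 * q by omega]
  rw [hsum, Nat.add_sub_cancel, hsinh,
    show (2 : ℝ) - 2 * ((p + q + 1 : ℕ) : ℝ) = -((2 * (p + q) : ℕ) : ℝ) by push_cast; ring,
    show 2 * ((q + 1 : ℕ) : ℝ) - 2 * ((p + q + 1 : ℕ) : ℝ) = -((2 * p : ℕ) : ℝ) by push_cast; ring]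
  simp only [rpow_neg_natCast, zpow_neg, zpow_natCast]
  exact four_pow_mul_inv_mul_sum_choose_le (sinh_pos_iff.mpr (by linarith)) (cosh_pos _)
    (by rw [cosh_sq]; ring) p q
end
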